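/- Let d ≥ 1, let T₁, …, T_d > 0, let β : ℝ^d → ℝ be C³ and periodic with periods Tᵢ (β(x + Tᵢeᵢ) = β(x) for all x ∈ ℝ^d and i = 1, …, d), and let g : ℝ → ℝ be differentiable with g′(y) ≤ 0 for every y ∈ ℝ. If −Δβ(x) = g(β(x)) for every x ∈ ℝ^d, then β is constant. -/

import Mathlib

/-!
At a maximum point of `β` every second directional derivative is `≤ 0`, so `g (max β) ≥ 0`;
likewise `g (min β) ≤ 0`. As `g` is antitone, `g ∘ β` is squeezed between these two values,
hence vanishes and `β` is harmonic. A periodic harmonic function is constant: the divergence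
of `β ∇β` is `|∇β|²`, and its integral over a period cell vanishes because the fluxes through
opposite faces cancel.
-/

open MeasureTheory Real

/-- The Laplacian of `β : ℝ^d → ℝ`, as the sum of second partial derivatives. -/
noncomputable def lap {d : ℕ} (β : EuclideanSpace ℝ (Fin d) → ℝ)
    (x : EuclideanSpace ℝ (Fin d)) : ℝ :=
  ∑ i : Fin d, iteratedFDeriv ℝ 2 β x ![EuclideanSpace.single i 1, EuclideanSpace.single i 1]

open Function Filter Set Topology

theorem IsLocalMax.deriv_deriv_nonpos {f : ℝ → ℝ} {a : ℝ} (h : IsLocalMax f a)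
    (hc : ContinuousAt f a) : deriv (deriv f) a ≤ 0 := by
  by_contra! hpos
  -- a strict second-order minimum at a local maximum forces `f` to be locally constant
  have hmin : IsLocalMin f a := isLocalMin_of_deriv_deriv_pos hpos h.deriv_eq_zero hc
  have hconst : f =ᶠ[𝓝 a] fun _ => f a := by
    filter_upwards [h, hmin] with x hmax hmin using le_antisymm hmax hmin
  rw [hconst.deriv.deriv_eq] at hpos
  simp at hpos

section Laplacian

variable {ι E F : Type*} [Fintype ι] [NormedAddCommGroup E] [NormedSpace ℝ E]
  [NormedAddCommGroup F] [NormedSpace ℝ F]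

noncomputable def laplacianAlong (e : ι → E) (f : E → ℝ) (x : E) : ℝ :=
  ∑ i, iteratedFDeriv ℝ 2 f x ![e i, e i]

theorem laplacianAlong_eq_sum_fderiv_fderiv (e : ι → E) (f : E → ℝ) (x : E) :
    laplacianAlong e f x = ∑ i, fderiv ℝ (fderiv ℝ f) x (e i) (e i) := by
  simp [laplacianAlong, iteratedFDeriv_two_apply]

theorem laplacianAlong_neg (e : ι → E) (f : E → ℝ) (x : E) :
    laplacianAlong e (-f) x = -laplacianAlong e f x := by
  simp [laplacianAlong, iteratedFDeriv_neg_apply]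

theorem laplacianAlong_comp_continuousLinearEquiv (L : E ≃L[ℝ] F) (e : ι → E) {f : F → ℝ}
    (hf : ContDiff ℝ 2 f) (x : E) :
    laplacianAlong e (f ∘ L) x = laplacianAlong (L ∘ e) f (L x) := by
  refine Finset.sum_congr rfl fun i _ => ?_
  rw [show f ∘ L = f ∘ (L : E →L[ℝ] F) from rfl,
    (L : E →L[ℝ] F).iteratedFDeriv_comp_right hf x le_rfl]
  simp only [ContinuousMultilinearMap.compContinuousLinearMap_apply]
  congr 1
  ext j
  fin_cases j <;> rfl

theorem IsLocalMax.iteratedFDeriv_two_apply_self_nonpos {f : E → ℝ} {a : E}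
    (h : IsLocalMax f a) (hf : ContDiff ℝ 2 f) (v : E) :
    iteratedFDeriv ℝ 2 f a ![v, v] ≤ 0 := by
  have hline : deriv (fun t : ℝ => f (a + t • v)) =
      fun t => iteratedFDeriv ℝ 1 f (a + t • v) fun _ => v := by
    ext t
    simpa using ContDiffAt.deriv_fderiv_add_smul (n := 0) (hf.of_le (by norm_num)).contDiffAt
  have hsecond : deriv (deriv fun t : ℝ => f (a + t • v)) 0 =
      iteratedFDeriv ℝ 2 f a ![v, v] := by
    rw [hline]
    convert ContDiffAt.deriv_fderiv_add_smul (n := 1) (t := 0)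
      (hf.of_le (by norm_num)).contDiffAt using 2
    · simp
    · ext j; fin_cases j <;> rfl
  rw [← hsecond]
  refine IsLocalMax.deriv_deriv_nonpos ?_ (hf.continuous.comp (by fun_prop)).continuousAt
  have h0 : IsLocalMax f (a + (0 : ℝ) • v) := by simpa using h
  exact h0.comp_continuous (g := fun t : ℝ => a + t • v) (by fun_prop)

theorem IsLocalMax.laplacianAlong_nonpos {f : E → ℝ} {a : E} (h : IsLocalMax f a)
    (hf : ContDiff ℝ 2 f) (e : ι → E) : laplacianAlong e f a ≤ 0 :=
  Finset.sum_nonpos fun i _ => h.iteratedFDeriv_two_apply_self_nonpos hf (e i)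

theorem IsLocalMin.laplacianAlong_nonneg {f : E → ℝ} {a : E} (h : IsLocalMin f a)
    (hf : ContDiff ℝ 2 f) (e : ι → E) : 0 ≤ laplacianAlong e f a := by
  have := h.neg.laplacianAlong_nonpos hf.neg e
  rw [show (fun x => -f x) = -f from rfl, laplacianAlong_neg] at this
  linarith

theorem laplacianAlong_eq_zero_of_antitone {e : ι → E} {f : E → ℝ} {g : ℝ → ℝ}
    (hf : ContDiff ℝ 2 f) (hg : Antitone g) (heq : ∀ x, -laplacianAlong e f x = g (f x))
    {a b : E} (ha : ∀ x, f x ≤ f a) (hb : ∀ x, f b ≤ f x) (x : E) :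
    laplacianAlong e f x = 0 := by
  have hga : 0 ≤ g (f a) := by
    rw [← heq, neg_nonneg]
    exact ((isMaxOn_univ_iff.2 ha).isLocalMax univ_mem).laplacianAlong_nonpos hf e
  have hgb : g (f b) ≤ 0 := by
    rw [← heq, neg_nonpos]
    exact ((isMinOn_univ_iff.2 hb).isLocalMin univ_mem).laplacianAlong_nonneg hf e
  have := heq x
  linarith [hg (ha x), hg (hb x)]

end Laplacian

theorem Function.Periodic.of_mem_addSubgroupClosure {G α : Type*} [AddGroup G] {f : G → α}
    {S : Set G} (hS : ∀ c ∈ S, Periodic f c) {c : G} (hc : c ∈ AddSubgroup.closure S) :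
    Periodic f c :=
  AddSubgroup.closure_induction hS (fun _ => by rw [add_zero])
    (fun _ _ _ _ h₁ h₂ => h₁.add_period h₂) (fun _ _ h => h.neg) hc

theorem Function.Periodic.fderiv {E F : Type*} [NormedAddCommGroup E] [NormedSpace ℝ E]
    [NormedAddCommGroup F] [NormedSpace ℝ F] {f : E → F} {c : E} (h : Periodic f c) :
    Periodic (fderiv ℝ f) c := fun x => by
  rw [← fderiv_comp_add_right, show (fun y => f (y + c)) = f from funext h]

section Lattice

variable {ι α : Type*} [Fintype ι] [DecidableEq ι] {T : ι → ℝ}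

theorem exists_mem_Icc_sub_mem_closure_periods (hT : ∀ i, 0 < T i) (x : ι → ℝ) :
    ∃ w ∈ Icc 0 T, x - w ∈ AddSubgroup.closure (range fun i => T i • Pi.single i (1 : ℝ)) := by
  refine ⟨fun i => toIcoMod (hT i) 0 (x i), ⟨fun i => ?_, fun i => ?_⟩, ?_⟩
  · exact (toIcoMod_mem_Ico' (hT i) (x i)).1
  · exact (toIcoMod_mem_Ico' (hT i) (x i)).2.le
  · have hx : x - (fun i => toIcoMod (hT i) 0 (x i)) =
        ∑ i, toIcoDiv (hT i) 0 (x i) • T i • Pi.single i (1 : ℝ) := by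
      ext j
      simp [Finset.sum_apply, Pi.single_apply, mul_comm]
    rw [hx]
    exact AddSubgroup.sum_mem _ fun i _ =>
      AddSubgroup.zsmul_mem _ (AddSubgroup.subset_closure (mem_range_self i)) _

variable {f : (ι → ℝ) → α}

theorem exists_mem_Icc_apply_eq_of_periodic (hT : ∀ i, 0 < T i)
    (hf : ∀ i, Periodic f (T i • Pi.single i 1)) (x : ι → ℝ) :
    ∃ w ∈ Icc 0 T, f w = f x := by
  obtain ⟨w, hw, hxw⟩ := exists_mem_Icc_sub_mem_closure_periods hT x
  refine ⟨w, hw, ?_⟩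
  simpa using (Periodic.of_mem_addSubgroupClosure (by simpa using hf) hxw w).symm

end Lattice

section Extrema

variable {ι : Type*} [Fintype ι] [DecidableEq ι] {T : ι → ℝ} {f : (ι → ℝ) → ℝ}

theorem exists_forall_le_of_periodic (hT : ∀ i, 0 < T i) (hc : Continuous f)
    (hf : ∀ i, Periodic f (T i • Pi.single i 1)) : ∃ a, ∀ x, f x ≤ f a := by
  obtain ⟨a, -, ha⟩ := isCompact_Icc.exists_isMaxOn (nonempty_Icc.2 fun i => (hT i).le)
    hc.continuousOn
  refine ⟨a, fun x => ?_⟩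
  obtain ⟨w, hw, hwx⟩ := exists_mem_Icc_apply_eq_of_periodic hT hf x
  exact hwx ▸ ha hw

theorem exists_forall_ge_of_periodic (hT : ∀ i, 0 < T i) (hc : Continuous f)
    (hf : ∀ i, Periodic f (T i • Pi.single i 1)) : ∃ a, ∀ x, f a ≤ f x := by
  obtain ⟨a, ha⟩ := exists_forall_le_of_periodic hT hc.neg fun i => (hf i).comp Neg.neg
  exact ⟨a, fun x => neg_le_neg_iff.1 (ha x)⟩

theorem eq_zero_of_periodic_of_integral_Icc_eq_zero (hT : ∀ i, 0 < T i) (hc : Continuous f)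
    (hnonneg : 0 ≤ f) (hf : ∀ i, Periodic f (T i • Pi.single i 1))
    (hint : ∫ x in Icc 0 T, f x = 0) (x : ι → ℝ) : f x = 0 := by
  have hae : f =ᵐ[volume.restrict (Icc 0 T)] 0 :=
    (setIntegral_eq_zero_iff_of_nonneg_ae (Eventually.of_forall hnonneg)
      (hc.continuousOn.integrableOn_compact isCompact_Icc)).1 hint
  have hclosure : Icc 0 T ⊆ closure (interior (Icc 0 T)) := by
    rw [← pi_univ_Icc, interior_pi_set finite_univ, closure_pi_set]
    refine pi_mono fun i _ => ?_
    rw [interior_Icc, Pi.zero_apply, closure_Ioo (hT i).ne]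
  obtain ⟨w, hw, hwx⟩ := exists_mem_Icc_apply_eq_of_periodic hT hf x
  exact hwx ▸ Measure.eqOn_of_ae_eq hae hc.continuousOn continuousOn_const hclosure hw

end Extrema

section Divergence

variable {n : ℕ} {T : Fin (n + 1) → ℝ}

theorem integral_divergence_eq_zero_of_periodic {E : Type*} [NormedAddCommGroup E]
    [NormedSpace ℝ E] [CompleteSpace E] (hT : 0 ≤ T) (F : Fin (n + 1) → (Fin (n + 1) → ℝ) → E)
    (F' : Fin (n + 1) → (Fin (n + 1) → ℝ) → (Fin (n + 1) → ℝ) →L[ℝ] E)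
    (hF : ∀ i x, HasFDerivAt (F i) (F' i x) x)
    (hint : IntegrableOn (fun x => ∑ i, F' i x (Pi.single i 1)) (Icc 0 T))
    (hper : ∀ i, Periodic (F i) (T i • Pi.single i 1)) :
    ∫ x in Icc 0 T, ∑ i, F' i x (Pi.single i 1) = 0 := by
  rw [integral_divergence_of_hasFDerivAt_off_countable' 0 T hT F F' ∅ countable_empty
    (fun i => (continuous_iff_continuousAt.2 fun x => (hF i x).continuousAt).continuousOn)
    (fun x _ i => hF i x) hint]
  refine Finset.sum_eq_zero fun i _ => sub_eq_zero.2 (integral_congr_ae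
    (Eventually.of_forall fun y => ?_))
  -- opposite faces of the box differ by the period `T i` in the `i`-th direction
  have hface : i.insertNth (T i) y =
      i.insertNth ((0 : Fin (n + 1) → ℝ) i) y + T i • Pi.single i 1 := by
    rw [← Pi.single_smul, smul_eq_mul, mul_one, ← Fin.insertNth_zero_right, ← Fin.insertNth_add]
    simp
  simp only [hface, hper i _]

end Divergence

section Liouville

variable {n : ℕ} {T : Fin (n + 1) → ℝ} {b : (Fin (n + 1) → ℝ) → ℝ}

theorem integral_sum_sq_partial_eq_neg_integral_mul_laplacianAlong (hT : 0 ≤ T)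
    (hb : ContDiff ℝ 2 b) (hper : ∀ i, Periodic b (T i • Pi.single i 1)) :
    ∫ x in Icc 0 T, ∑ i, fderiv ℝ b x (Pi.single i 1) ^ 2 =
      -∫ x in Icc 0 T, b x * laplacianAlong (fun i => Pi.single i 1) b x := by
  have hD : ContDiff ℝ 1 (fderiv ℝ b) := hb.fderiv_right (by norm_num)
  have hpartial : ∀ i x, HasFDerivAt (fun y => fderiv ℝ b y (Pi.single i 1))
      ((fderiv ℝ (fderiv ℝ b) x).flip (Pi.single i 1)) x := fun i x => by
    simpa using ((hD.differentiable one_ne_zero) x).hasFDerivAt.clm_apply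
      (hasFDerivAt_const (Pi.single i (1 : ℝ)) x)
  have hgrad : Continuous fun x => ∑ i, fderiv ℝ b x (Pi.single i 1) ^ 2 := by
    have := hD.continuous; fun_prop
  have hlap : Continuous fun x => b x * laplacianAlong (fun i => Pi.single i 1) b x := by
    have := hb.continuous; have := hD.continuous_fderiv one_ne_zero
    simp only [laplacianAlong_eq_sum_fderiv_fderiv]; fun_prop
  -- the divergence of the field `b ∇b` is `b Δb + |∇b|²`
  have hpoint : (fun x => ∑ i, (b x • (fderiv ℝ (fderiv ℝ b) x).flip (Pi.single i 1) +
      fderiv ℝ b x (Pi.single i 1) • fderiv ℝ b x) (Pi.single i 1)) =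
      fun x => b x * laplacianAlong (fun i => Pi.single i 1) b x +
        ∑ i, fderiv ℝ b x (Pi.single i 1) ^ 2 := by
    funext x
    simp [laplacianAlong_eq_sum_fderiv_fderiv, Finset.sum_add_distrib, Finset.mul_sum, sq]
  have hdiv := integral_divergence_eq_zero_of_periodic hT
    (fun i x => b x * fderiv ℝ b x (Pi.single i 1)) _
    (fun i x => ((hb.differentiable (by norm_num)) x).hasFDerivAt.mul (hpartial i x))
    (by rw [hpoint]; exact (hlap.add hgrad).continuousOn.integrableOn_compact isCompact_Icc)
    (fun i x => by simp only [hper i x, (hper i).fderiv x])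
  rw [hpoint, integral_add (hlap.continuousOn.integrableOn_compact isCompact_Icc)
    (hgrad.continuousOn.integrableOn_compact isCompact_Icc)] at hdiv
  linarith

theorem apply_eq_of_periodic_of_laplacianAlong_eq_zero (hT : ∀ i, 0 < T i)
    (hb : ContDiff ℝ 2 b) (hper : ∀ i, Periodic b (T i • Pi.single i 1))
    (hΔ : ∀ x, laplacianAlong (fun i => Pi.single i 1) b x = 0) (x y : Fin (n + 1) → ℝ) :
    b x = b y := by
  have hgrad : ∀ z, ∑ i, fderiv ℝ b z (Pi.single i 1) ^ 2 = 0 := by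
    refine eq_zero_of_periodic_of_integral_Icc_eq_zero hT ?_ ?_ ?_ ?_
    · have := hb.continuous_fderiv (by norm_num); fun_prop
    · exact fun z => Finset.sum_nonneg fun i _ => sq_nonneg _
    · exact fun j z => by simp only [(hper j).fderiv z]
    · simpa [hΔ] using integral_sum_sq_partial_eq_neg_integral_mul_laplacianAlong
        (fun i => (hT i).le) hb hper
  refine is_const_of_fderiv_eq_zero (hb.differentiable (by norm_num)) (fun z => ?_) x y
  refine ContinuousLinearMap.coe_injective ((Pi.basisFun ℝ _).ext fun i => ?_)
  have := (Finset.sum_eq_zero_iff_of_nonneg fun j _ => sq_nonneg _).1 (hgrad z) i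
    (Finset.mem_univ i)
  simpa using this

end Liouville

theorem stmt_3_general (d : ℕ) (T : Fin d → ℝ) (hT : ∀ i, 0 < T i)
    (β : EuclideanSpace ℝ (Fin d) → ℝ) (hβ : ContDiff ℝ 3 β)
    (hper : ∀ (x : EuclideanSpace ℝ (Fin d)) (i : Fin d),
      β (x + T i • EuclideanSpace.single i (1 : ℝ)) = β x)
    (g : ℝ → ℝ) (hg : Differentiable ℝ g) (hg' : ∀ y, deriv g y ≤ 0)
    (heq : ∀ x, -lap β x = g (β x)) :
    ∀ x y, β x = β y := by
  cases d with
  | zero => exact fun x y => congrArg β (Subsingleton.elim x y)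
  | succ n =>
  -- the divergence theorem lives on `Fin (n + 1) → ℝ`, so transport `β` there
  set L := (EuclideanSpace.equiv (Fin (n + 1)) ℝ).symm
  have hβ2 : ContDiff ℝ 2 β := hβ.of_le (by norm_num)
  have hb : ContDiff ℝ 2 (β ∘ L) := hβ2.comp L.contDiff
  have hbper : ∀ i, Periodic (β ∘ L) (T i • Pi.single i 1) := fun i w => by
    simpa [L] using hper (L w) i
  have hbeq : ∀ w, -laplacianAlong (fun i => Pi.single i 1) (β ∘ L) w = g ((β ∘ L) w) :=
    fun w => by
      rw [laplacianAlong_comp_continuousLinearEquiv L _ hβ2]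
      exact heq (L w)
  obtain ⟨a, ha⟩ := exists_forall_le_of_periodic hT hb.continuous hbper
  obtain ⟨a', ha'⟩ := exists_forall_ge_of_periodic hT hb.continuous hbper
  have hΔ := laplacianAlong_eq_zero_of_antitone hb (antitone_of_deriv_nonpos hg hg') hbeq ha ha'
  intro x y
  simpa [L] using
    apply_eq_of_periodic_of_laplacianAlong_eq_zero hT hb hbper hΔ (L.symm x) (L.symm y)

/-- Elliptic rigidity lemma: if `β : ℝ^d → ℝ` is `C³` and periodic with periods `Tᵢ > 0`,
`g : ℝ → ℝ` is differentiable with `g′ ≤ 0` everywhere, and `−Δβ = g(β)` everywhere, then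
`β` is constant. -/
theorem stmt_3 (d : ℕ) (hd : 1 ≤ d) (T : Fin d → ℝ) (hT : ∀ i, 0 < T i)
    (β : EuclideanSpace ℝ (Fin d) → ℝ) (hβ : ContDiff ℝ 3 β)
    (hper : ∀ (x : EuclideanSpace ℝ (Fin d)) (i : Fin d),
      β (x + T i • EuclideanSpace.single i (1 : ℝ)) = β x)
    (g : ℝ → ℝ) (hg : Differentiable ℝ g) (hg' : ∀ y, deriv g y ≤ 0)
    (heq : ∀ x, -lap β x = g (β x)) :
    ∀ x y, β x = β y :=
  stmt_3_general d T hT β hβ hper g hg hg' heq
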